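/- arXiv:1202.6467 — 2 statements merged into one kernel-verified Lean document; each statement's English description precedes it below -/
import Mathlib

section
/- Let Γ ↷ Y be an amenable action of a countable group on a countable set with infinite orbits, and let m ≥ 1. Then the diagonal action of Γ on the complement of the large diagonal in Y^m, namely on X = {(y_1,…,y_m) ∈ Y^m : y_i ≠ y_j for all i ≠ j}, is amenable. -/
/-!
For a finite `A ⊆ Y` let `A⁽ᵐ⁾` be the set of `m`-tuples of distinct points of `A`; the diagonal
action maps `A⁽ᵐ⁾` onto `(g • A)⁽ᵐ⁾`. Transpositions of `A` act on `A⁽ᵐ⁾`, so each coordinate of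
a tuple in `A⁽ᵐ⁾` is equidistributed on `A`. Hence the tuples with some coordinate in
`A \ g • A` make up at most the fraction `m |A \ g • A| / |A|` of `A⁽ᵐ⁾`, and
`|A⁽ᵐ⁾ ∆ g • A⁽ᵐ⁾| / |A⁽ᵐ⁾| ≤ m |A ∆ g • A| / |A|`: almost invariant sets with at least `m`
points yield almost invariant sets of tuples. Such sets exist because orbits are infinite: no
tail of a Følner sequence stays inside a finite set, so Følner sets can be glued onto a given
almost invariant set until it is large enough.
-/

/-- `C` is a Følner sequence for the action of `G` on `X` given by `π`. -/
def IsFolnerSeq {G X : Type*} [Group G] (π : G →* Equiv.Perm X) (C : ℕ → Set X) : Prop :=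
  (∀ n, (C n).Finite ∧ (C n).Nonempty) ∧
    ∀ g : G, Filter.Tendsto
      (fun n => ((symmDiff (C n) (π g '' C n)).ncard : ℝ) / (C n).ncard)
      Filter.atTop (nhds 0)

/-- The action of `G` on `X` given by `π` is amenable (admits a Følner sequence). -/
def IsAmenableAction {G X : Type*} [Group G] (π : G →* Equiv.Perm X) : Prop :=
  ∃ C : ℕ → Set X, IsFolnerSeq π C

/-- The action given by `π` has infinite orbits. -/
def HasInfiniteOrbits {G X : Type*} [Group G] (π : G →* Equiv.Perm X) : Prop :=
  ∀ x : X, {y : X | ∃ g : G, π g x = y}.Infinite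

/-- The action given by `π` is transitive. -/
def IsTransitiveAction {G X : Type*} [Group G] (π : G →* Equiv.Perm X) : Prop :=
  ∀ x y : X, ∃ g : G, π g x = y

/-- The action given by `π` is almost free: every non-trivial element has finitely many
fixed points. -/
def IsAlmostFreeAction {G X : Type*} [Group G] (π : G →* Equiv.Perm X) : Prop :=
  ∀ g : G, g ≠ 1 → {x : X | π g x = x}.Finite

/-- The class 𝒜 of countable groups admitting a faithful, transitive and amenable action
on an infinite countable set. -/
def InClassA (G : Type*) [Group G] : Prop :=
  ∃ (X : Type) (_ : Countable X) (_ : Infinite X) (π : G →* Equiv.Perm X),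
    Function.Injective π ∧ IsTransitiveAction π ∧ IsAmenableAction π

/-- The class 𝒜_ℱ of countable groups admitting an amenable, almost free action with
infinite orbits on a countable set. -/
def InClassAF (G : Type*) [Group G] : Prop :=
  ∃ (X : Type) (_ : Countable X) (π : G →* Equiv.Perm X),
    IsAmenableAction π ∧ IsAlmostFreeAction π ∧ HasInfiniteOrbits π

/-- The diagonal permutation induced by `e` on the complement of the large diagonal in
`Y^m`, i.e. on the set of `m`-tuples with pairwise distinct coordinates. -/
def diagPerm {Y : Type*} (m : ℕ) (e : Equiv.Perm Y) :
    Equiv.Perm {v : Fin m → Y // ∀ i j, i ≠ j → v i ≠ v j} :=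
  Equiv.subtypeEquiv ((Equiv.refl (Fin m)).arrowCongr e)
    (fun v => by
      constructor
      · intro hv i j hij
        simpa [e.injective.ne_iff] using hv i j hij
      · intro hv i j hij
        have := hv i j hij
        simpa [e.injective.ne_iff] using this)

/-- The diagonal action of `Γ` on the complement of the large diagonal in `Y^m`. -/
def diagHom {Γ Y : Type*} [Group Γ] (π : Γ →* Equiv.Perm Y) (m : ℕ) :
    Γ →* Equiv.Perm {v : Fin m → Y // ∀ i j, i ≠ j → v i ≠ v j} where
  toFun g := diagPerm m (π g)
  map_one' := by
    ext v
    simp [diagPerm]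
  map_mul' g h := by
    ext v
    simp [diagPerm]

open Filter Set Function

def IsAlmostInvariant {G X : Type*} [Group G] (π : G →* Equiv.Perm X) (S : Finset G) (ε : ℝ)
    (D : Set X) : Prop :=
  ∀ s ∈ S, ((symmDiff D (π s '' D)).ncard : ℝ) ≤ ε * D.ncard

section AlmostInvariant

variable {G X : Type*} [Group G] {π : G →* Equiv.Perm X} {S S' : Finset G} {ε ε' : ℝ}
  {C : ℕ → Set X} {D E : Set X}

theorem IsAlmostInvariant.mono (h : IsAlmostInvariant π S' ε D) (hS : S ⊆ S') (hε : ε ≤ ε') :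
    IsAlmostInvariant π S ε' D :=
  fun s hs => (h s (hS hs)).trans (mul_le_mul_of_nonneg_right hε (Nat.cast_nonneg _))

theorem IsAlmostInvariant.union (hD : IsAlmostInvariant π S ε D) (hE : IsAlmostInvariant π S ε' E)
    (hDfin : D.Finite) (hEfin : E.Finite) (hε : 0 ≤ ε) (hε' : 0 ≤ ε') :
    IsAlmostInvariant π S (ε + ε') (D ∪ E) := by
  intro s hs
  have hsub : symmDiff (D ∪ E) (π s '' (D ∪ E)) ⊆
      symmDiff D (π s '' D) ∪ symmDiff E (π s '' E) := by
    rw [image_union]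
    exact union_symmDiff_union_subset ..
  have hD' : (D.ncard : ℝ) ≤ (D ∪ E).ncard := by
    exact_mod_cast ncard_le_ncard subset_union_left (hDfin.union hEfin)
  have hE' : (E.ncard : ℝ) ≤ (D ∪ E).ncard := by
    exact_mod_cast ncard_le_ncard subset_union_right (hDfin.union hEfin)
  calc ((symmDiff (D ∪ E) (π s '' (D ∪ E))).ncard : ℝ)
      ≤ (symmDiff D (π s '' D)).ncard + (symmDiff E (π s '' E)).ncard := by
        exact_mod_cast (ncard_le_ncard hsub ((hDfin.symmDiff (hDfin.image _)).union
          (hEfin.symmDiff (hEfin.image _)))).trans (ncard_union_le _ _)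
    _ ≤ ε * D.ncard + ε' * E.ncard := add_le_add (hD s hs) (hE s hs)
    _ ≤ ε * (D ∪ E).ncard + ε' * (D ∪ E).ncard := by gcongr
    _ = (ε + ε') * (D ∪ E).ncard := by ring

theorem IsFolnerSeq.eventually_isAlmostInvariant (hC : IsFolnerSeq π C) (S : Finset G)
    (hε : 0 < ε) : ∀ᶠ n in atTop, IsAlmostInvariant π S ε (C n) := by
  refine (eventually_all_finset S).mpr fun s _ => ?_
  filter_upwards [(hC.2 s).eventually (eventually_le_nhds hε)] with n hn
  rwa [div_le_iff₀ (by exact_mod_cast (ncard_pos (hC.1 n).1).mpr (hC.1 n).2)] at hn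

theorem IsFolnerSeq.exists_isAlmostInvariant_not_subset (hC : IsFolnerSeq π C)
    (hinf : HasInfiniteOrbits π) (S : Finset G) (hε : 0 < ε) {F : Set X} (hF : F.Finite) :
    ∃ n, IsAlmostInvariant π S ε (C n) ∧ ¬C n ⊆ F := by
  classical
  have hescape : ∀ x, ∃ g : G, x ∈ F → π g x ∉ F := fun x => by
    obtain ⟨_, ⟨g, rfl⟩, hg⟩ := (hinf x).exists_notMem_finite hF
    exact ⟨g, fun _ => hg⟩
  choose escape hescape using hescape
  set δ := min ε (1 / (F.ncard + 1))
  obtain ⟨n, hn⟩ := (hC.eventually_isAlmostInvariant (S ∪ hF.toFinset.image escape)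
    (lt_min hε Nat.one_div_pos_of_nat)).exists
  refine ⟨n, hn.mono Finset.subset_union_left (min_le_left _ _), fun hCF => ?_⟩
  obtain ⟨x, hx⟩ := (hC.1 n).2
  -- a set inside `F` is moved by `escape x` by less than one point, hence not at all
  have hlt : ((symmDiff (C n) (π (escape x) '' C n)).ncard : ℝ) < 1 :=
    calc _ ≤ δ * (C n).ncard := hn _ (Finset.mem_union_right _
          (Finset.mem_image_of_mem _ (hF.mem_toFinset.mpr (hCF hx))))
      _ ≤ 1 / (F.ncard + 1) * F.ncard := by
        gcongr
        exact min_le_right _ _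
      _ < 1 := by
        rw [one_div_mul_eq_div, div_lt_one (by positivity)]
        linarith
  have hfix : π (escape x) '' C n = C n := by
    refine (symmDiff_eq_bot.mp ?_).symm
    rw [bot_eq_empty, ← ncard_eq_zero ((hC.1 n).1.symmDiff ((hC.1 n).1.image _))]
    exact_mod_cast Nat.lt_one_iff.mp (by exact_mod_cast hlt)
  exact hescape x (hCF hx) (hCF (hfix ▸ mem_image_of_mem _ hx))

theorem IsFolnerSeq.exists_isAlmostInvariant_le_ncard (hC : IsFolnerSeq π C)
    (hinf : HasInfiniteOrbits π) (S : Finset G) (N : ℕ) (hε : 0 < ε) :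
    ∃ D : Set X, D.Finite ∧ D.Nonempty ∧ N ≤ D.ncard ∧ IsAlmostInvariant π S ε D := by
  induction N generalizing ε with
  | zero =>
    obtain ⟨n, hn⟩ := (hC.eventually_isAlmostInvariant S hε).exists
    exact ⟨C n, (hC.1 n).1, (hC.1 n).2, Nat.zero_le _, hn⟩
  | succ N ih =>
    obtain ⟨D, hDfin, hDne, hDcard, hD⟩ := ih (half_pos hε)
    obtain ⟨n, hn, hnD⟩ := hC.exists_isAlmostInvariant_not_subset hinf S (half_pos hε) hDfin
    obtain ⟨x, hxC, hxD⟩ := not_subset.mp hnD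
    have hfin := hDfin.union (hC.1 n).1
    refine ⟨D ∪ C n, hfin, hDne.mono subset_union_left, ?_, ?_⟩
    · calc N + 1 ≤ D.ncard + 1 := by omega
        _ = (insert x D).ncard := (ncard_insert_of_notMem hxD hDfin).symm
        _ ≤ (D ∪ C n).ncard := ncard_le_ncard (insert_subset (Or.inr hxC) subset_union_left) hfin
    · simpa using hD.union hn hDfin (hC.1 n).1 (half_pos hε).le (half_pos hε).le

theorem isAmenableAction_of_forall_exists_isAlmostInvariant [Countable G]
    (h : ∀ (S : Finset G) (ε : ℝ), 0 < ε →
      ∃ D : Set X, D.Finite ∧ D.Nonempty ∧ IsAlmostInvariant π S ε D) :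
    IsAmenableAction π := by
  classical
  obtain ⟨f, hf⟩ := exists_surjective_nat G
  choose D hDfin hDne hD using fun n : ℕ =>
    h ((Finset.range (n + 1)).image f) (1 / (n + 1)) Nat.one_div_pos_of_nat
  refine ⟨D, fun n => ⟨hDfin n, hDne n⟩, fun g => ?_⟩
  obtain ⟨j, rfl⟩ := hf g
  refine squeeze_zero' (Eventually.of_forall fun n => by positivity) ?_
    tendsto_one_div_add_atTop_nhds_zero_nat
  filter_upwards [eventually_ge_atTop j] with n hn
  rw [div_le_iff₀ (by exact_mod_cast (ncard_pos (hDfin n)).mpr (hDne n))]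
  exact hD n _ (Finset.mem_image_of_mem f (Finset.mem_range.mpr (by omega)))

end AlmostInvariant

def distinctTuplesIn {Y : Type*} (m : ℕ) (A : Set Y) :
    Set {v : Fin m → Y // ∀ i j, i ≠ j → v i ≠ v j} :=
  {v | ∀ i, v.1 i ∈ A}

section distinctTuplesIn

variable {Y : Type*} {m : ℕ} {A B S : Set Y}

theorem Set.Finite.distinctTuplesIn (hA : A.Finite) : (distinctTuplesIn m A).Finite :=
  ((Finite.pi fun _ => hA).preimage Subtype.val_injective.injOn).subset fun _ hv i _ => hv i

theorem distinctTuplesIn_nonempty (hA : A.Finite) (hm : m ≤ A.ncard) :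
    (distinctTuplesIn m A).Nonempty := by
  have := hA.fintype
  obtain ⟨f⟩ := Function.Embedding.nonempty_of_card_le (α := Fin m) (β := A)
    (by rwa [Fintype.card_fin, ← Nat.card_eq_fintype_card, Nat.card_coe_set_eq])
  exact ⟨⟨fun i => f i, fun i j hij h => hij (f.injective (Subtype.ext h))⟩, fun i => (f i).2⟩

theorem image_diagPerm_distinctTuplesIn (e : Equiv.Perm Y) :
    diagPerm m e '' distinctTuplesIn m A = distinctTuplesIn m (e '' A) := by
  ext v
  simp [Equiv.image_eq_preimage_symm, distinctTuplesIn, diagPerm]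

theorem ncard_distinctTuplesIn_coord_eq_of_mem {a b : Y} (ha : a ∈ A) (hb : b ∈ A) (i : Fin m) :
    {v ∈ distinctTuplesIn m A | v.1 i = a}.ncard =
      {v ∈ distinctTuplesIn m A | v.1 i = b}.ncard := by
  classical
  have hswap : ∀ y, Equiv.swap a b y ∈ A ↔ y ∈ A := fun y => by
    rw [Equiv.swap_apply_def]; split_ifs <;> simp_all
  rw [← (diagPerm m (Equiv.swap a b)).injective.injOn.ncard_image]
  congr 1
  ext v
  simp [Equiv.image_eq_preimage_symm, distinctTuplesIn, diagPerm, hswap, Equiv.swap_apply_eq_iff]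

theorem ncard_distinctTuplesIn_coord_mem_mul (hA : A.Finite) (hS : S ⊆ A) (i : Fin m) :
    {v ∈ distinctTuplesIn m A | v.1 i ∈ S}.ncard * A.ncard =
      S.ncard * (distinctTuplesIn m A).ncard := by
  rcases A.eq_empty_or_nonempty with rfl | ⟨a, ha⟩
  · simp [subset_empty_iff.mp hS]
  set T := distinctTuplesIn m A
  have hfiber : ∀ R ⊆ A, {v ∈ T | v.1 i ∈ R}.ncard = R.ncard * {v ∈ T | v.1 i = a}.ncard := by
    intro R hR
    have hunion : {v ∈ T | v.1 i ∈ R} = ⋃ b ∈ R, {v ∈ T | v.1 i = b} := by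
      ext v; simp [and_comm]
    rw [hunion, (hA.subset hR).ncard_biUnion
      (fun _ _ => hA.distinctTuplesIn.subset (sep_subset _ _))
      (fun b _ b' _ hbb' => disjoint_left.mpr fun _ hv hv' => hbb' (hv.2.symm.trans hv'.2)),
      finsum_mem_congr rfl fun b hb => ncard_distinctTuplesIn_coord_eq_of_mem (hR hb) ha i,
      ← finsum_one (s := R), finsum_mem_mul' _ _ (hA.subset hR)]
    simp only [one_mul, T]
  have hT : {v ∈ T | v.1 i ∈ A} = T := sep_eq_self_iff_mem_true.mpr fun v hv => hv i
  rw [hfiber S hS, ← hT, hfiber A subset_rfl, hT]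
  ring

theorem ncard_distinctTuplesIn_diff_mul_le (hA : A.Finite) :
    (distinctTuplesIn m A \ distinctTuplesIn m B).ncard * A.ncard ≤
      m * (A \ B).ncard * (distinctTuplesIn m A).ncard := by
  have hsub : distinctTuplesIn m A \ distinctTuplesIn m B ⊆
      ⋃ i, {v ∈ distinctTuplesIn m A | v.1 i ∈ A \ B} := by
    rintro v ⟨hvA, hvB⟩
    obtain ⟨i, hi⟩ := not_forall.mp hvB
    exact mem_iUnion.mpr ⟨i, hvA, hvA i, hi⟩
  calc (distinctTuplesIn m A \ distinctTuplesIn m B).ncard * A.ncard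
      ≤ (∑ i, {v ∈ distinctTuplesIn m A | v.1 i ∈ A \ B}.ncard) * A.ncard := by
        gcongr
        exact (ncard_le_ncard hsub (finite_iUnion fun _ =>
          hA.distinctTuplesIn.subset (sep_subset _ _))).trans (ncard_iUnion_le_of_fintype _)
    _ = ∑ _ : Fin m, (A \ B).ncard * (distinctTuplesIn m A).ncard := by
        rw [Finset.sum_mul]
        exact Finset.sum_congr rfl fun i _ => ncard_distinctTuplesIn_coord_mem_mul hA sdiff_subset i
    _ = m * (A \ B).ncard * (distinctTuplesIn m A).ncard := by
        simp [mul_assoc]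

theorem ncard_symmDiff_image_diagPerm_mul_le (e : Equiv.Perm Y) (hA : A.Finite) :
    (symmDiff (distinctTuplesIn m A) (diagPerm m e '' distinctTuplesIn m A)).ncard * A.ncard ≤
      m * (symmDiff A (e '' A)).ncard * (distinctTuplesIn m A).ncard := by
  have hcard : (e '' A).ncard = A.ncard := ncard_image_of_injective _ e.injective
  have hTcard : (distinctTuplesIn m (e '' A)).ncard = (distinctTuplesIn m A).ncard := by
    rw [← image_diagPerm_distinctTuplesIn, ncard_image_of_injective _ (diagPerm m e).injective]
  have hdisj : (symmDiff A (e '' A)).ncard = (A \ e '' A).ncard + (e '' A \ A).ncard :=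
    ncard_union_eq disjoint_sdiff_sdiff hA.sdiff (hA.image e).sdiff
  have h₁ := ncard_distinctTuplesIn_diff_mul_le (m := m) (B := e '' A) hA
  have h₂ := ncard_distinctTuplesIn_diff_mul_le (m := m) (B := A) (hA.image e)
  rw [hcard, hTcard] at h₂
  rw [image_diagPerm_distinctTuplesIn, hdisj]
  calc _ ≤ ((distinctTuplesIn m A \ distinctTuplesIn m (e '' A)).ncard +
        (distinctTuplesIn m (e '' A) \ distinctTuplesIn m A).ncard) * A.ncard := by
        gcongr
        exact ncard_union_le _ _
    _ ≤ _ := by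
        rw [add_mul, mul_add, add_mul]
        exact add_le_add h₁ h₂

end distinctTuplesIn

theorem IsAlmostInvariant.diagHom_distinctTuplesIn {Γ Y : Type*} [Group Γ]
    {π : Γ →* Equiv.Perm Y} {S : Finset Γ} {ε : ℝ} {D : Set Y} (h : IsAlmostInvariant π S ε D)
    (hDfin : D.Finite) (hDne : D.Nonempty) (m : ℕ) :
    IsAlmostInvariant (diagHom π m) S (m * ε) (distinctTuplesIn m D) := by
  intro s hs
  have hpos : (0 : ℝ) < D.ncard := by exact_mod_cast (ncard_pos hDfin).mpr hDne
  have key := ncard_symmDiff_image_diagPerm_mul_le (m := m) (π s) hDfin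
  rw [← mul_le_mul_iff_of_pos_right hpos]
  calc ((symmDiff (distinctTuplesIn m D) (diagHom π m s '' distinctTuplesIn m D)).ncard : ℝ) *
        D.ncard
      ≤ m * (symmDiff D (π s '' D)).ncard * (distinctTuplesIn m D).ncard := by
        exact_mod_cast key
    _ ≤ m * (ε * D.ncard) * (distinctTuplesIn m D).ncard := by gcongr; exact h s hs
    _ = m * ε * (distinctTuplesIn m D).ncard * D.ncard := by ring

theorem amenable_diagonal_action_off_diagonal_general
    {Γ Y : Type*} [Group Γ] [Countable Γ]
    (π : Γ →* Equiv.Perm Y) (m : ℕ)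
    (hamen : IsAmenableAction π) (hinf : HasInfiniteOrbits π) :
    IsAmenableAction (diagHom π m) := by
  obtain ⟨C, hC⟩ := hamen
  refine isAmenableAction_of_forall_exists_isAlmostInvariant fun S ε hε => ?_
  obtain ⟨D, hDfin, hDne, hmD, hD⟩ :=
    hC.exists_isAlmostInvariant_le_ncard hinf S m (div_pos hε m.cast_add_one_pos)
  refine ⟨distinctTuplesIn m D, hDfin.distinctTuplesIn, distinctTuplesIn_nonempty hDfin hmD,
    (hD.diagHom_distinctTuplesIn hDfin hDne m).mono subset_rfl ?_⟩
  rw [mul_div_assoc', div_le_iff₀ m.cast_add_one_pos]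
  nlinarith

/-- **Lemma 2.2.** If `Γ` acts amenably with infinite orbits on a countable set `Y` then
the diagonal action of `Γ` on the complement of the large diagonal in `Y^m` is amenable
(`m ≥ 1`). -/
theorem amenable_diagonal_action_off_diagonal
    {Γ Y : Type*} [Group Γ] [Countable Γ] [Countable Y]
    (π : Γ →* Equiv.Perm Y) (m : ℕ) (hm : 1 ≤ m)
    (hamen : IsAmenableAction π) (hinf : HasInfiniteOrbits π) :
    IsAmenableAction (diagHom π m) :=
  amenable_diagonal_action_off_diagonal_general π m hamen hinf
end

section
/- Let X be an infinite countable set, Γ_1, Γ_2 ≤ S(X) countable subgroups with a common finite subgroup Σ acting freely on X, and let Z and π_w be as defined. If both actions Γ_1 ↷ X and Γ_2 ↷ X have infinite orbits, then the set U = {w ∈ Z : π_w is transitive} is a dense G_δ subset of Z. -/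
section AmalgamSetup

universe u

variable (Γ₁ Γ₂ : Type u) [Group Γ₁] [Group Γ₂]

/-- The `Bool`-indexed family consisting of the two groups `Γ₁` and `Γ₂`. -/
def AmalgFam : Bool → Type u := fun b => cond b Γ₁ Γ₂

instance : ∀ b, Group (AmalgFam Γ₁ Γ₂ b)
  | true => ‹Group Γ₁›
  | false => ‹Group Γ₂›

variable {Γ₁ Γ₂} {S : Type u} [Group S]

/-- The two structure maps of the amalgam, as a `Bool`-indexed family of homomorphisms. -/
def amalgMaps (f₁ : S →* Γ₁) (f₂ : S →* Γ₂) : ∀ b : Bool, S →* AmalgFam Γ₁ Γ₂ b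
  | true => f₁
  | false => f₂

/-- The amalgamated free product `Γ₁ *_S Γ₂` along `f₁ : S →* Γ₁` and `f₂ : S →* Γ₂`,
realized as the pushout. -/
abbrev AmalgProd (f₁ : S →* Γ₁) (f₂ : S →* Γ₂) : Type _ :=
  Monoid.PushoutI (amalgMaps f₁ f₂)

/-- The canonical map `Γ₁ →* Γ₁ *_S Γ₂`. -/
abbrev amalgInl (f₁ : S →* Γ₁) (f₂ : S →* Γ₂) : Γ₁ →* AmalgProd f₁ f₂ :=
  Monoid.PushoutI.of (φ := amalgMaps f₁ f₂) true

/-- The canonical map `Γ₂ →* Γ₁ *_S Γ₂`. -/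
abbrev amalgInr (f₁ : S →* Γ₁) (f₂ : S →* Γ₂) : Γ₂ →* AmalgProd f₁ f₂ :=
  Monoid.PushoutI.of (φ := amalgMaps f₁ f₂) false

end AmalgamSetup

/-- The topology of pointwise convergence on the group `S(X)` of all bijections of a
(discrete, countable) set `X`:  `wₙ → w` iff for every finite `F ⊆ X` eventually
`wₙ|_F = w|_F`. -/
noncomputable instance permPointwiseTopology (X : Type*) :
    TopologicalSpace (Equiv.Perm X) :=
  TopologicalSpace.induced (fun w : Equiv.Perm X => (w : X → X))
    (@Pi.topologicalSpace X (fun _ => X) (fun _ => ⊥))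

section AmalgBaire

variable {X : Type*} (Γ₁ Γ₂ : Subgroup (Equiv.Perm X)) (Sig : Subgroup (Equiv.Perm X))
  (h1 : Sig ≤ Γ₁) (h2 : Sig ≤ Γ₂)

/-- The set `Z = {w ∈ S(X) : wσ = σw for all σ ∈ Σ}`. -/
def amalgZ : Set (Equiv.Perm X) :=
  {w | ∀ σ : Sig, w * (σ : Equiv.Perm X) = (σ : Equiv.Perm X) * w}

/-- The `Bool`-indexed family of homomorphisms `Γ₁ →* S(X)`, `Γ₂ →* S(X)` given by
`g ↦ g` on `Γ₁` and `h ↦ w⁻¹hw` on `Γ₂`. -/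
def amalgPiMaps (w : Equiv.Perm X) :
    ∀ b : Bool, AmalgFam ↥Γ₁ ↥Γ₂ b →* Equiv.Perm X
  | true => Γ₁.subtype
  | false => (MulAut.conj w⁻¹).toMonoidHom.comp Γ₂.subtype

/-- For `w ∈ Z`, the homomorphism `π_w : Γ₁ *_Σ Γ₂ →* S(X)` determined by `π_w(g) = g`
for `g ∈ Γ₁` and `π_w(h) = w⁻¹hw` for `h ∈ Γ₂`. -/
def amalgPi (w : amalgZ Sig) :
    AmalgProd (Subgroup.inclusion h1) (Subgroup.inclusion h2) →* Equiv.Perm X :=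
  Monoid.PushoutI.lift (amalgPiMaps Γ₁ Γ₂ w.1) Sig.subtype (by
    intro b
    cases b with
    | true => rfl
    | false =>
      ext σ x
      have hcomm : w.1⁻¹ * (σ : Equiv.Perm X) * (w.1⁻¹)⁻¹ = (σ : Equiv.Perm X) := by
        rw [inv_inv, mul_assoc, ← w.2 σ]; group
      show (w.1⁻¹ * (σ : Equiv.Perm X) * (w.1⁻¹)⁻¹) x = (σ : Equiv.Perm X) x
      rw [hcomm])

end AmalgBaire

/-!
`S(X)` is Polish, and `Z`, the centralizer of `Σ`, is closed in it, hence Baire. The set of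
`w` with `π_w` transitive is the intersection over pairs `(x, y)` of the sets `V_{x,y}` of those
`w` for which some `π_w g` maps `x` to `y`; these are open since `w ↦ π_w g` is continuous, and
there are countably many. For density of `V_{x,y}` near `w`, pick `b ∈ Γ₁ y` and `c` with
`w c ∈ Γ₂ (w x)` whose `Σ`-orbits avoid a given finite set, `x`, and each other.
Freeness of `Σ` makes the exchange of `Σ b` and `Σ c` a `Σ`-equivariant involution `τ`; then
`w τ ∈ Z` agrees with `w` on the finite set and `π_{wτ}(g⁻¹ h)` maps `x` to `y`.
-/

open Equiv Topology Filter

namespace Equiv.Perm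

variable {X : Type*}

theorem isEmbedding_coeFn [t : TopologicalSpace X] [DiscreteTopology X] :
    IsEmbedding (fun w : Perm X => (w : X → X)) := by
  refine ⟨⟨?_⟩, DFunLike.coe_injective⟩
  change _ = TopologicalSpace.induced _ (@Pi.topologicalSpace X (fun _ => X) fun _ => t)
  rw [DiscreteTopology.eq_bot (α := X)]
  rfl

theorem continuous_iff_isOpen_setOf_apply_eq {Y : Type*} [TopologicalSpace Y]
    {f : Y → Perm X} : Continuous f ↔ ∀ x y, IsOpen {a | f a x = y} := by
  let : TopologicalSpace X := ⊥
  have : DiscreteTopology X := ⟨rfl⟩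
  simp only [isEmbedding_coeFn.continuous_iff, continuous_pi_iff, continuous_discrete_rng]
  rfl

theorem isOpen_setOf_apply_eq (x y : X) : IsOpen {w : Perm X | w x = y} :=
  continuous_iff_isOpen_setOf_apply_eq.1 continuous_id x y

instance : IsTopologicalGroup (Perm X) where
  continuous_mul := continuous_iff_isOpen_setOf_apply_eq.2 fun x y => by
    have : {p : Perm X × Perm X | (p.1 * p.2) x = y} =
        ⋃ z, {p | p.2 x = z} ∩ {p | p.1 z = y} := by
      ext p; simp [eq_comm]
    rw [this]
    exact isOpen_iUnion fun z => ((isOpen_setOf_apply_eq x z).preimage continuous_snd).inter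
      ((isOpen_setOf_apply_eq z y).preimage continuous_fst)
  continuous_inv := continuous_iff_isOpen_setOf_apply_eq.2 fun x y => by
    simp_rw [inv_eq_iff_eq, @eq_comm _ x]
    exact isOpen_setOf_apply_eq y x

instance : T2Space (Perm X) :=
  let : TopologicalSpace X := ⊥
  have : DiscreteTopology X := ⟨rfl⟩
  isEmbedding_coeFn.t2Space

theorem nhds_hasBasis (w : Perm X) :
    (𝓝 w).HasBasis Set.Finite fun F => {v | ∀ x ∈ F, v x = w x} := by
  let : TopologicalSpace X := ⊥
  have : DiscreteTopology X := ⟨rfl⟩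
  rw [isEmbedding_coeFn.nhds_eq_comap, nhds_pi]
  simp only [nhds_discrete]
  exact (hasBasis_pi_pure _).comap _

instance [Countable X] : PolishSpace (Perm X) := by
  let : TopologicalSpace X := ⊥
  have : DiscreteTopology X := ⟨rfl⟩
  have : PolishSpace X := inferInstance
  have hcont : Continuous fun w : Perm X => ((w : X → X), ((w⁻¹ : Perm X) : X → X)) :=
    isEmbedding_coeFn.continuous.prodMk (isEmbedding_coeFn.continuous.comp continuous_inv)
  have hrange : Set.range (fun w : Perm X => ((w : X → X), ((w⁻¹ : Perm X) : X → X))) =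
      (⋂ x, {p | p.2 (p.1 x) = x}) ∩ ⋂ x, {p | p.1 (p.2 x) = x} := by
    ext p
    simp only [Set.mem_inter_iff, Set.mem_iInter, Set.mem_ofPred_eq]
    refine ⟨?_, fun hp => ⟨⟨p.1, p.2, hp.1, hp.2⟩, rfl⟩⟩
    rintro ⟨w, rfl⟩
    exact ⟨w.symm_apply_apply, w.apply_symm_apply⟩
  have hclosed : IsClosed (Set.range
      (fun w : Perm X => ((w : X → X), ((w⁻¹ : Perm X) : X → X)))) := by
    have heval : Continuous fun q : (X → X) × X => q.1 q.2 :=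
      continuous_prod_of_discrete_right.2 fun x => continuous_apply x
    rw [hrange]
    refine IsClosed.inter (isClosed_iInter fun x => isClosed_eq ?_ continuous_const)
      (isClosed_iInter fun x => isClosed_eq ?_ continuous_const)
    · exact heval.comp (continuous_snd.prodMk ((continuous_apply x).comp continuous_fst))
    · exact heval.comp (continuous_fst.prodMk ((continuous_apply x).comp continuous_snd))
  exact (IsClosedEmbedding.mk (.of_comp hcont continuous_fst isEmbedding_coeFn) hclosed).polishSpace

theorem dense_of_forall_exists_eqOn {Y : Set (Perm X)} {S : Set Y}
    (h : ∀ w : Y, ∀ F : Set X, F.Finite →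
      ∃ v ∈ S, ∀ x ∈ F, (v : Perm X) x = (w : Perm X) x) :
    Dense S := fun w => by
  rw [mem_closure_iff_nhds_basis (by rw [nhds_subtype]; exact (nhds_hasBasis w.1).comap _)]
  exact h w

end Equiv.Perm

namespace MulAction

variable {G X : Type*} [Group G] [MulAction G X]

theorem exists_mem_forall_smul_notMem [Finite G] {T : Set X} (hT : T.Infinite)
    {F : Set X} (hF : F.Finite) : ∃ z ∈ T, ∀ g : G, g • z ∉ F := by
  have hbad : (⋃ g : G, (g • ·) ⁻¹' F).Finite :=
    Set.finite_iUnion fun g => hF.preimage (MulAction.injective g).injOn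
  obtain ⟨z, hzT, hz⟩ := (hT.sdiff hbad).nonempty
  exact ⟨z, hzT, fun g hg => hz (Set.mem_iUnion.2 ⟨g, hg⟩)⟩

theorem exists_equivariant_swap_orbits (hfree : ∀ (g : G) (x : X), g • x = x → g = 1)
    {b c : X} (hcb : ∀ g : G, g • c ≠ b) :
    ∃ τ : Perm X, (∀ (g : G) (x : X), τ (g • x) = g • τ x) ∧ τ b = c ∧
      ∀ x, (∀ g : G, g • b ≠ x) → (∀ g : G, g • c ≠ x) → τ x = x := by
  classical
  let ι : G × Bool → X := fun p => p.1 • cond p.2 b c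
  have hι : Function.Injective ι := by
    rintro ⟨g, i⟩ ⟨h, j⟩ hgh
    have key : (h⁻¹ * g) • cond i b c = cond j b c := by
      rw [mul_smul, show g • cond i b c = h • cond j b c from hgh, inv_smul_smul]
    cases i <;> cases j <;> simp only [cond_true, cond_false] at key
    · simpa [inv_mul_eq_one, eq_comm] using hfree _ _ key
    · exact absurd key (hcb _)
    · exact absurd (by rw [← key, inv_smul_smul]) (hcb (h⁻¹ * g)⁻¹)
    · simpa [inv_mul_eq_one, eq_comm] using hfree _ _ key
  let τ : Perm X :=
    Perm.extendDomain (Equiv.prodCongr (Equiv.refl G) boolNot) (Equiv.ofInjective ι hι)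
  have hτι : ∀ p, τ (ι p) = ι (p.1, !p.2) := fun p =>
    Perm.extendDomain_apply_image _ (Equiv.ofInjective ι hι) p
  have hsmul : ∀ (g : G) p, g • ι p = ι (g * p.1, p.2) := fun g p => (mul_smul _ _ _).symm
  have hfix : ∀ x ∉ Set.range ι, τ x = x := fun x hx =>
    Perm.extendDomain_apply_not_subtype _ (Equiv.ofInjective ι hι) hx
  refine ⟨τ, fun g x => ?_, by simpa [ι] using hτι (1, true), fun x hb hc => hfix x ?_⟩
  · by_cases hx : x ∈ Set.range ι
    · obtain ⟨p, rfl⟩ := hx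
      rw [hsmul, hτι, hτι, hsmul]
    · have hgx : g • x ∉ Set.range ι := by
        rintro ⟨p, hp⟩
        exact hx ⟨(g⁻¹ * p.1, p.2), by rw [← hsmul, hp, inv_smul_smul]⟩
      rw [hfix x hx, hfix _ hgx]
  · rintro ⟨⟨g, _ | _⟩, hg⟩
    exacts [hc g hg, hb g hg]

end MulAction

section AmalgamAction

variable {X : Type*} (Γ₁ Γ₂ Sig : Subgroup (Perm X)) (h1 : Sig ≤ Γ₁) (h2 : Sig ≤ Γ₂)

theorem mem_amalgZ_iff_mem_centralizer {w : Perm X} :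
    w ∈ amalgZ Sig ↔ w ∈ Subgroup.centralizer (Sig : Set (Perm X)) := by
  simp only [amalgZ, Subgroup.mem_centralizer_iff, SetLike.mem_coe, Subtype.forall, eq_comm]
  rfl

theorem isClosed_amalgZ : IsClosed (amalgZ Sig) := by
  convert Set.isClosed_centralizer (Sig : Set (Perm X))
  exact Set.ext fun _ => mem_amalgZ_iff_mem_centralizer Sig

instance [Countable X] : PolishSpace (amalgZ Sig) := (isClosed_amalgZ Sig).polishSpace

theorem amalgPi_inl (w : amalgZ Sig) (g : Γ₁) :
    amalgPi Γ₁ Γ₂ Sig h1 h2 w (amalgInl _ _ g) = g := by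
  unfold amalgPi
  erw [Monoid.PushoutI.lift_of]
  rfl

theorem amalgPi_inr (w : amalgZ Sig) (g : Γ₂) :
    amalgPi Γ₁ Γ₂ Sig h1 h2 w (amalgInr _ _ g) = (w : Perm X)⁻¹ * g * w := by
  unfold amalgPi
  erw [Monoid.PushoutI.lift_of]
  change MulAut.conj (w : Perm X)⁻¹ (g : Perm X) = _
  rw [MulAut.conj_apply, inv_inv]

theorem amalgPi_base (w : amalgZ Sig) (σ : Sig) :
    amalgPi Γ₁ Γ₂ Sig h1 h2 w (Monoid.PushoutI.base _ σ) = σ :=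
  Monoid.PushoutI.lift_base _ _ _ _

theorem continuous_amalgPi_apply
    (g : AmalgProd (Subgroup.inclusion h1) (Subgroup.inclusion h2)) :
    Continuous fun w : amalgZ Sig => amalgPi Γ₁ Γ₂ Sig h1 h2 w g := by
  induction g using Monoid.PushoutI.induction_on with
  | of i γ =>
    cases i with
    | true => exact continuous_const.congr fun w => (amalgPi_inl Γ₁ Γ₂ Sig h1 h2 w γ).symm
    | false =>
      refine Continuous.congr ?_ fun w => (amalgPi_inr Γ₁ Γ₂ Sig h1 h2 w γ).symm
      fun_prop
  | base σ =>
    simp only [amalgPi_base]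
    exact continuous_const
  | mul a b ha hb =>
    simp only [map_mul]
    exact ha.mul hb

theorem isOpen_setOf_exists_amalgPi_apply_eq (x y : X) :
    IsOpen {w : amalgZ Sig | ∃ g, amalgPi Γ₁ Γ₂ Sig h1 h2 w g x = y} := by
  simp only [Set.ofPred_exists]
  exact isOpen_iUnion fun g =>
    (Perm.isOpen_setOf_apply_eq x y).preimage (continuous_amalgPi_apply Γ₁ Γ₂ Sig h1 h2 g)

theorem dense_setOf_exists_amalgPi_apply_eq [Finite Sig]
    (hfree : ∀ (σ : Sig) (x : X), σ • x = x → σ = 1)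
    (hinf₁ : HasInfiniteOrbits Γ₁.subtype) (hinf₂ : HasInfiniteOrbits Γ₂.subtype)
    (x y : X) :
    Dense {w : amalgZ Sig | ∃ g, amalgPi Γ₁ Γ₂ Sig h1 h2 w g x = y} := by
  refine Perm.dense_of_forall_exists_eqOn fun w F hF => ?_
  obtain ⟨b, ⟨g, hgb⟩, hb⟩ :=
    MulAction.exists_mem_forall_smul_notMem (G := Sig) (hinf₁ y) (hF.insert x)
  obtain ⟨c, ⟨h, hhc⟩, hc⟩ := MulAction.exists_mem_forall_smul_notMem (G := Sig)
    ((hinf₂ ((w : Perm X) x)).preimage (f := (w : Perm X)) fun z _ => (w : Perm X).surjective z)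
    ((hF.insert x).insert b)
  obtain ⟨τ, hτ_comm, hτb, hτ_fix⟩ :=
    MulAction.exists_equivariant_swap_orbits hfree (b := b) (c := c)
    fun σ hσ => hc σ (hσ ▸ Set.mem_insert _ _)
  have hτ_fix' : ∀ z ∈ insert x F, τ z = z := fun z hz => hτ_fix z
    (fun σ hσ => hb σ (hσ ▸ hz)) (fun σ hσ => hc σ (hσ ▸ Set.mem_insert_of_mem _ hz))
  have hwτ : (w : Perm X) * τ ∈ amalgZ Sig := by
    refine (mem_amalgZ_iff_mem_centralizer Sig).2 <|
      Subgroup.mul_mem _ ((mem_amalgZ_iff_mem_centralizer Sig).1 w.2) <|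
        Subgroup.mem_centralizer_iff.2 fun σ hσ => ?_
    exact Perm.ext fun z => (hτ_comm ⟨σ, hσ⟩ z).symm
  refine ⟨⟨_, hwτ⟩, ⟨(amalgInl _ _ g)⁻¹ * amalgInr _ _ h, ?_⟩, fun z hz => ?_⟩
  · simp only [map_mul, map_inv, amalgPi_inl, amalgPi_inr]
    rw [Subgroup.coe_subtype] at hgb hhc
    simp only [mul_inv_rev, Perm.mul_apply, hτ_fix' x (Set.mem_insert _ _), hhc,
      Perm.inv_eq_iff_eq, hτb, hgb]
  · simp [hτ_fix' z (Set.mem_insert_of_mem _ hz)]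

end AmalgamAction

theorem amalg_transitive_dense_Gdelta_general
    {X : Type} [Countable X]
    (Γ₁ Γ₂ Sig : Subgroup (Equiv.Perm X)) [Finite Sig]
    (h1 : Sig ≤ Γ₁) (h2 : Sig ≤ Γ₂)
    (hfree : ∀ σ : Sig, σ ≠ 1 → ∀ x : X, (σ : Equiv.Perm X) x ≠ x)
    (hinf₁ : HasInfiniteOrbits Γ₁.subtype)
    (hinf₂ : HasInfiniteOrbits Γ₂.subtype) :
    Dense {w : amalgZ Sig | IsTransitiveAction (amalgPi Γ₁ Γ₂ Sig h1 h2 w)} ∧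
    IsGδ {w : amalgZ Sig | IsTransitiveAction (amalgPi Γ₁ Γ₂ Sig h1 h2 w)} := by
  have hU : {w : amalgZ Sig | IsTransitiveAction (amalgPi Γ₁ Γ₂ Sig h1 h2 w)} =
      ⋂ p : X × X, {w | ∃ g, amalgPi Γ₁ Γ₂ Sig h1 h2 w g p.1 = p.2} := by
    ext w
    simp [IsTransitiveAction]
  have hfree_smul : ∀ (σ : Sig) (x : X), σ • x = x → σ = 1 := fun σ x hσx =>
    by_contra fun hσ => hfree σ hσ x hσx
  have hopen := fun p : X × X => isOpen_setOf_exists_amalgPi_apply_eq Γ₁ Γ₂ Sig h1 h2 p.1 p.2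
  rw [hU]
  exact ⟨dense_iInter_of_isOpen hopen fun p =>
      dense_setOf_exists_amalgPi_apply_eq Γ₁ Γ₂ Sig h1 h2 hfree_smul hinf₁ hinf₂ p.1 p.2,
    .iInter fun p => (hopen p).isGδ⟩

/-- **Lemma 4.1.**  Let `X` be an infinite countable set, `Γ₁, Γ₂ ≤ S(X)` countable
subgroups with a common finite subgroup `Σ` acting freely on `X`.  If both actions
`Γ₁ ↷ X` and `Γ₂ ↷ X` have infinite orbits, then `U = {w ∈ Z : π_w is transitive}` is
a dense `G_δ` subset of `Z`. -/
theorem amalg_transitive_dense_Gdelta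
    {X : Type} [Countable X] [Infinite X]
    (Γ₁ Γ₂ Sig : Subgroup (Equiv.Perm X)) [Countable Γ₁] [Countable Γ₂] [Finite Sig]
    (h1 : Sig ≤ Γ₁) (h2 : Sig ≤ Γ₂)
    (hfree : ∀ σ : Sig, σ ≠ 1 → ∀ x : X, (σ : Equiv.Perm X) x ≠ x)
    (hinf₁ : HasInfiniteOrbits Γ₁.subtype)
    (hinf₂ : HasInfiniteOrbits Γ₂.subtype) :
    Dense {w : amalgZ Sig | IsTransitiveAction (amalgPi Γ₁ Γ₂ Sig h1 h2 w)} ∧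
    IsGδ {w : amalgZ Sig | IsTransitiveAction (amalgPi Γ₁ Γ₂ Sig h1 h2 w)} :=
  amalg_transitive_dense_Gdelta_general Γ₁ Γ₂ Sig h1 h2 hfree hinf₁ hinf₂
end
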